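/- If D is a mixing coherent set of desirable options, then for any interior point o of the positive cone, the functional u_o(x) := sup{α ∈ ℝ : x - αo ∈ D} is linear (additive and homogeneous). -/

import Mathlib

/-- The set of all positive linear combinations of elements of `S`. -/
def Posi {V : Type*} [AddCommGroup V] [Module ℝ V] (S : Set V) : Set V :=
  {x | ∃ (n : ℕ) (c : Fin n → ℝ) (v : Fin n → V),
    0 < n ∧ (∀ i, 0 < c i) ∧ (∀ i, v i ∈ S) ∧ x = ∑ i, c i • v i}

/-- A set of desirable options is mixing if whenever some positive linear combination of a
finite option set is desirable, some element of the option set is desirable. -/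
def MixingSet {V : Type*} [AddCommGroup V] [Module ℝ V] (D : Set V) : Prop :=
  ∀ A : Finset V, (Posi (A : Set V) ∩ D).Nonempty → ∃ a ∈ A, a ∈ D

/-!
Because `D` is a convex cone, `u_o` is superadditive and positively homogeneous; because `0 ∉ D`
and `o` is an interior point of `D`, it is finite. Mixing supplies the reverse inequality
`0 ≤ u_o x + u_o (-x)`: if `α > u_o x` and `β > u_o (-x)` had `α + β < 0`, then
`(x - α • o) + (-x - β • o) = -(α + β) • o` would be desirable, so one of the two summands would be
too, contradicting the choice of `α` or `β`. Hence `u_o` is odd, and an odd superadditive map is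
additive.
-/

open Filter

theorem MixingSet.mem_or_mem_of_add_mem {V : Type*} [AddCommGroup V] [Module ℝ V] {D : Set V}
    (hD : MixingSet D) {x y : V} (h : x + y ∈ D) : x ∈ D ∨ y ∈ D := by
  classical
  have hposi : x + y ∈ Posi (({x, y} : Finset V) : Set V) :=
    ⟨2, fun _ => 1, ![x, y], two_pos, fun _ => one_pos, fun i => by fin_cases i <;> simp,
      by simp [Fin.sum_univ_two]⟩
  obtain ⟨a, ha, haD⟩ := hD _ ⟨_, hposi, h⟩
  rcases Finset.mem_insert.1 ha with rfl | ha
  · exact .inl haD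
  · exact .inr (Finset.mem_singleton.1 ha ▸ haD)

/-- `u_o x`, as a real `sSup`: junk value `0` unless the set is nonempty and bounded above. -/
noncomputable def lowerPrice {V : Type*} [AddCommGroup V] [Module ℝ V] (D : Set V) (o x : V) :
    ℝ :=
  sSup {α : ℝ | x - α • o ∈ D}

section lowerPrice

variable {V : Type*} [AddCommGroup V] [Module ℝ V] [TopologicalSpace V] [IsTopologicalAddGroup V]
  [ContinuousSMul ℝ V] {C : ConvexCone ℝ V} {o : V}

theorem eventually_add_smul_mem (ho : o ∈ interior (C : Set V)) (x : V) :
    ∀ᶠ t : ℝ in atTop, x + t • o ∈ C := by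
  have hlim : Tendsto (fun t : ℝ => t⁻¹ • x + o) atTop (nhds o) := by
    simpa using ((tendsto_inv_atTop_zero (𝕜 := ℝ)).smul_const x).add_const o
  filter_upwards [hlim.eventually (mem_interior_iff_mem_nhds.1 ho), eventually_gt_atTop 0]
    with t ht htpos
  have : t • (t⁻¹ • x + o) = x + t • o := by rw [smul_add, smul_inv_smul₀ htpos.ne']
  exact this ▸ C.smul_mem htpos ht

theorem nonempty_setOf_sub_smul_mem (ho : o ∈ interior (C : Set V)) (x : V) :
    {α : ℝ | x - α • o ∈ C}.Nonempty := by
  obtain ⟨t, ht⟩ := (eventually_add_smul_mem ho x).exists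
  exact ⟨-t, by simpa [sub_eq_add_neg] using ht⟩

theorem bddAbove_setOf_sub_smul_mem (hC0 : (0 : V) ∉ C) (ho : o ∈ interior (C : Set V)) (x : V) :
    BddAbove {α : ℝ | x - α • o ∈ C} := by
  obtain ⟨T, hT⟩ := eventually_atTop.1 (eventually_add_smul_mem ho (-x))
  refine ⟨T, fun α hα => le_of_not_ge fun hTα => hC0 ?_⟩
  have : x - α • o + (-x + α • o) = 0 := by abel
  exact this ▸ C.add_mem hα (hT α hTα)

theorem le_lowerPrice (hC0 : (0 : V) ∉ C) (ho : o ∈ interior (C : Set V)) {x : V} {α : ℝ}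
    (h : x - α • o ∈ C) : α ≤ lowerPrice C o x :=
  le_csSup (bddAbove_setOf_sub_smul_mem hC0 ho x) h

theorem lowerPrice_le (ho : o ∈ interior (C : Set V)) {x : V} {b : ℝ}
    (h : ∀ α, x - α • o ∈ C → α ≤ b) : lowerPrice C o x ≤ b :=
  csSup_le (nonempty_setOf_sub_smul_mem ho x) h

theorem lowerPrice_add_lowerPrice_le (hC0 : (0 : V) ∉ C) (ho : o ∈ interior (C : Set V))
    (x y : V) :
    lowerPrice C o x + lowerPrice C o y ≤ lowerPrice C o (x + y) := by
  rw [← le_sub_iff_add_le]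
  refine lowerPrice_le ho fun α hα => le_sub_iff_add_le'.2 ?_
  rw [← le_sub_iff_add_le]
  refine lowerPrice_le ho fun β hβ => le_sub_iff_add_le'.2 ?_
  have : x - α • o + (y - β • o) = x + y - (α + β) • o := by rw [add_smul]; abel
  exact le_lowerPrice hC0 ho (this ▸ C.add_mem hα hβ)

theorem lowerPrice_smul_of_pos (hC0 : (0 : V) ∉ C) (ho : o ∈ interior (C : Set V)) (x : V)
    {c : ℝ} (hc : 0 < c) : lowerPrice C o (c • x) = c * lowerPrice C o x := by
  refine le_antisymm (lowerPrice_le ho fun α hα => ?_) ?_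
  · have : c⁻¹ • (c • x - α • o) = x - (α / c) • o := by
      rw [smul_sub, inv_smul_smul₀ hc.ne', smul_smul, div_eq_inv_mul]
    have hle := le_lowerPrice hC0 ho (this ▸ C.smul_mem (inv_pos.2 hc) hα)
    rwa [div_le_iff₀' hc] at hle
  · rw [← le_div_iff₀' hc]
    refine lowerPrice_le ho fun β hβ => (le_div_iff₀' hc).2 ?_
    have : c • (x - β • o) = c • x - (c * β) • o := by rw [smul_sub, smul_smul]
    exact le_lowerPrice hC0 ho (this ▸ C.smul_mem hc hβ)

theorem lowerPrice_add_lowerPrice_neg_nonneg (hC0 : (0 : V) ∉ C) (ho : o ∈ interior (C : Set V))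
    (hmix : MixingSet (C : Set V)) (x : V) :
    0 ≤ lowerPrice C o x + lowerPrice C o (-x) := by
  by_contra! h
  obtain ⟨α, hxα, hα⟩ := exists_between
    (show lowerPrice C o x < -lowerPrice C o (-x) by linarith)
  obtain ⟨β, hxβ, hβ⟩ := exists_between (show lowerPrice C o (-x) < -α by linarith)
  have hsum : x - α • o + (-x - β • o) = -(α + β) • o := by rw [neg_smul, add_smul]; abel
  have hmem : -(α + β) • o ∈ C := C.smul_mem (by linarith) (interior_subset ho)
  rcases hmix.mem_or_mem_of_add_mem (hsum ▸ hmem) with h | h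
  · exact (le_lowerPrice hC0 ho h).not_gt hxα
  · exact (le_lowerPrice hC0 ho h).not_gt hxβ

theorem lowerPrice_zero (hC0 : (0 : V) ∉ C) (ho : o ∈ interior (C : Set V))
    (hmix : MixingSet (C : Set V)) : lowerPrice C o 0 = 0 := by
  have h₁ := lowerPrice_add_lowerPrice_le hC0 ho (0 : V) 0
  have h₂ := lowerPrice_add_lowerPrice_neg_nonneg hC0 ho hmix 0
  rw [add_zero] at h₁
  rw [neg_zero] at h₂
  linarith

theorem lowerPrice_neg (hC0 : (0 : V) ∉ C) (ho : o ∈ interior (C : Set V))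
    (hmix : MixingSet (C : Set V)) (x : V) : lowerPrice C o (-x) = -lowerPrice C o x := by
  have h := lowerPrice_add_lowerPrice_le hC0 ho x (-x)
  rw [add_neg_cancel, lowerPrice_zero hC0 ho hmix] at h
  linarith [lowerPrice_add_lowerPrice_neg_nonneg hC0 ho hmix x]

theorem lowerPrice_add (hC0 : (0 : V) ∉ C) (ho : o ∈ interior (C : Set V))
    (hmix : MixingSet (C : Set V)) (x y : V) :
    lowerPrice C o (x + y) = lowerPrice C o x + lowerPrice C o y := by
  have h := lowerPrice_add_lowerPrice_le hC0 ho (x + y) (-y)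
  rw [add_neg_cancel_right, lowerPrice_neg hC0 ho hmix] at h
  linarith [lowerPrice_add_lowerPrice_le hC0 ho x y]

theorem lowerPrice_smul (hC0 : (0 : V) ∉ C) (ho : o ∈ interior (C : Set V))
    (hmix : MixingSet (C : Set V)) (x : V) (c : ℝ) :
    lowerPrice C o (c • x) = c * lowerPrice C o x := by
  rcases lt_trichotomy c 0 with hc | rfl | hc
  · rw [← neg_neg c, neg_smul, lowerPrice_neg hC0 ho hmix,
      lowerPrice_smul_of_pos hC0 ho x (neg_pos.2 hc)]
    ring
  · rw [zero_smul, lowerPrice_zero hC0 ho hmix, zero_mul]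
  · exact lowerPrice_smul_of_pos hC0 ho x hc

end lowerPrice

theorem stmt12_general {V : Type*} [NormedAddCommGroup V] [NormedSpace ℝ V]
    (gt : V → V → Prop)
    (D : Set V)
    (hD0 : (0 : V) ∉ D)
    (hDcone : ∀ x ∈ D, ∀ y ∈ D, ∀ l m : ℝ, 0 ≤ l → 0 ≤ m → 0 < l + m → l • x + m • y ∈ D)
    (hDpos : {x : V | gt x 0} ⊆ D)
    (hmix : MixingSet D)
    (o : V) (ho : o ∈ interior {x : V | gt x 0}) :
    (∀ x y : V,
      sSup {α : ℝ | (x + y) - α • o ∈ D} =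
        sSup {α : ℝ | x - α • o ∈ D} + sSup {α : ℝ | y - α • o ∈ D}) ∧
    (∀ (x : V) (c : ℝ),
      sSup {α : ℝ | (c • x) - α • o ∈ D} = c * sSup {α : ℝ | x - α • o ∈ D}) := by
  let C : ConvexCone ℝ V :=
    { carrier := D
      smul_mem' := fun c hc x hx => by
        simpa using hDcone x hx x hx c 0 hc.le le_rfl (by simpa using hc)
      add_mem' := fun x hx y hy => by
        simpa using hDcone x hx y hy 1 1 zero_le_one zero_le_one (by norm_num) }
  have hoC : o ∈ interior (C : Set V) := interior_mono hDpos ho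
  exact ⟨lowerPrice_add hD0 hoC hmix, lowerPrice_smul hD0 hoC hmix⟩

theorem stmt12 {V : Type*} [NormedAddCommGroup V] [NormedSpace ℝ V] [CompleteSpace V]
    (gt : V → V → Prop)
    (hirr : ∀ x : V, ¬ gt x x)
    (htrans : ∀ x y z : V, gt x y → gt y z → gt x z)
    (haddc : ∀ x y z : V, gt x y → gt (x + z) (y + z))
    (hsmulc : ∀ (x y : V) (c : ℝ), 0 < c → gt x y → gt (c • x) (c • y))
    (D : Set V)
    (hD0 : (0 : V) ∉ D)
    (hDcone : ∀ x ∈ D, ∀ y ∈ D, ∀ l m : ℝ, 0 ≤ l → 0 ≤ m → 0 < l + m → l • x + m • y ∈ D)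
    (hDpos : {x : V | gt x 0} ⊆ D)
    (hmix : MixingSet D)
    (o : V) (ho : o ∈ interior {x : V | gt x 0}) :
    (∀ x y : V,
      sSup {α : ℝ | (x + y) - α • o ∈ D} =
        sSup {α : ℝ | x - α • o ∈ D} + sSup {α : ℝ | y - α • o ∈ D}) ∧
    (∀ (x : V) (c : ℝ),
      sSup {α : ℝ | (c • x) - α • o ∈ D} = c * sSup {α : ℝ | x - α • o ∈ D}) :=
  stmt12_general gt D hD0 hDcone hDpos hmix o ho
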